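/- For every bounded continuous potential f ∈ C_b(X,ℝ), the set of equilibrium states Eq(f) = { μ ∈ M^a_σ(X) : h^v(μ) + μ(f) = sup_{ν ∈ M^a_σ(X)} [ h^v(ν) + ν(f) ] } is a convex and weak-* compact subset of M^a_σ(X). -/

import Mathlib

open MeasureTheory Filter Topology BoundedContinuousFunction

noncomputable section

variable {E : Type*} [MetricSpace E]

/-- The metric on the sequence space `X = E^ℕ`:
`d_X(x,y) = ∑_{n=1}^∞ 2⁻ⁿ · min(d_E(x_n,y_n), 1)`. -/
def dX (x y : ℕ → E) : ℝ :=
  ∑' n : ℕ, ((1 : ℝ) / 2) ^ (n + 1) * min (dist (x n) (y n)) 1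

/-- The left shift `σ(x₁,x₂,x₃,…) = (x₂,x₃,…)`. -/
def shift (x : ℕ → E) : ℕ → E := fun n => x (n + 1)

theorem continuous_shift : Continuous (shift (E := E)) :=
  continuous_pi fun n => continuous_apply (n + 1)

/-- Prepending one symbol: `ax = (a, x₁, x₂, …)`. -/
def cons (a : E) (x : ℕ → E) : ℕ → E := fun n => Nat.casesOn n a x

/-- Prepending a finite word `a = (a₁,…,a_n)`. -/
def prepend {n : ℕ} (a : Fin n → E) (x : ℕ → E) : ℕ → E :=
  fun k => if h : k < n then a ⟨k, h⟩ else x (k - n)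

/-- Birkhoff sums `f_n = ∑_{k=0}^{n-1} f ∘ σᵏ`. -/
def birkhoff (f : (ℕ → E) → ℝ) (n : ℕ) (x : ℕ → E) : ℝ :=
  ∑ k ∈ Finset.range n, f (shift^[k] x)

/-- Boundedness of a real-valued function on `X`. -/
def Bdd (g : (ℕ → E) → ℝ) : Prop := ∃ M : ℝ, ∀ x, |g x| ≤ M

/-- `g` is `α`-Hölder with constant `C` (w.r.t. the metric `dX`). -/
def HolderConst (α C : ℝ) (g : (ℕ → E) → ℝ) : Prop :=
  ∀ x y, |g x - g y| ≤ C * dX x y ^ α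

/-- `g ∈ Hol(α)`: bounded, continuous and `α`-Hölder. -/
def MemHol (α : ℝ) (g : (ℕ → E) → ℝ) : Prop :=
  Continuous g ∧ Bdd g ∧ ∃ C : ℝ, HolderConst α C g

/-- `g ∈ C_b(X,ℝ)`: bounded and continuous. -/
def MemCb (g : (ℕ → E) → ℝ) : Prop := Continuous g ∧ Bdd g

/-- The Hölder seminorm `D_α(g) = sup_{x ≠ y} |g x - g y| / d_X(x,y)^α`. -/
def Dalpha (α : ℝ) (g : (ℕ → E) → ℝ) : ℝ :=
  sSup {r : ℝ | ∃ x y : ℕ → E, x ≠ y ∧ r = |g x - g y| / dX x y ^ α}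

/-- The supremum norm `‖g‖_∞`. -/
def supNorm (g : (ℕ → E) → ℝ) : ℝ := ⨆ x : ℕ → E, |g x|

/-- The Hölder norm `‖g‖_α = ‖g‖_∞ + D_α(g)`. -/
def alphaNorm (α : ℝ) (g : (ℕ → E) → ℝ) : ℝ := supNorm g + Dalpha α g

variable [MeasurableSpace E] [BorelSpace E]

/-- The Ruelle transfer operator `L_f φ(x) = ∫_E e^{f(ax)} φ(ax) dp(a)`. -/
def ruelle (p : Measure E) (f φ : (ℕ → E) → ℝ) : (ℕ → E) → ℝ :=
  fun x => ∫ a, Real.exp (f (cons a x)) * φ (cons a x) ∂p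

/-- The normalized operators `P^m_n(φ) = L_f^m(φ · L_f^n 1) / L_f^{m+n} 1`. -/
def Pmn (p : Measure E) (f : (ℕ → E) → ℝ) (m n : ℕ) (φ : (ℕ → E) → ℝ) : (ℕ → E) → ℝ :=
  fun x => (ruelle p f)^[m] (fun y => φ y * (ruelle p f)^[n] (fun _ => 1) y) x /
    (ruelle p f)^[m + n] (fun _ => 1) x

/-- The equivalent bounded metric `d̄(x,y) = min{1, 4 C_f d_X(x,y)^α}`. -/
def dbar (Cf α : ℝ) (x y : ℕ → E) : ℝ := min 1 (4 * Cf * dX x y ^ α)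

/-- The Wasserstein distance associated to `d̄`, via Kantorovich duality. -/
def wass (Cf α : ℝ) (μ₁ μ₂ : Measure (ℕ → E)) : ℝ :=
  sSup {r : ℝ | ∃ g : (ℕ → E) → ℝ,
    (∀ x y, |g x - g y| ≤ dbar Cf α x y) ∧ r = (∫ x, g x ∂μ₁) - ∫ x, g x ∂μ₂}

/-- The shift as a continuous self-map of `X`. -/
def shiftCM : C(ℕ → E, ℕ → E) := ⟨shift, continuous_shift⟩

variable (E) in
/-- `M^a_1(X)`: the finitely additive probability functionals, i.e. the weak-* dual
elements `μ` of `C_b(X,ℝ)` with `μ(1) = 1` and `μ(g) ≥ 0` whenever `g ≥ 0`. -/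
def Ma1 : Set (WeakDual ℝ ((ℕ → E) →ᵇ ℝ)) :=
  {μ | μ 1 = 1 ∧ ∀ g : (ℕ → E) →ᵇ ℝ, 0 ≤ g → 0 ≤ μ g}

variable (E) in
/-- `M^a_σ(X)`: the shift-invariant elements of `M^a_1(X)`. -/
def Maσ : Set (WeakDual ℝ ((ℕ → E) →ᵇ ℝ)) :=
  {μ | μ ∈ Ma1 E ∧ ∀ g : (ℕ → E) →ᵇ ℝ, μ (g.compContinuous shiftCM) = μ g}

/-- `log λ_g = lim_{n→∞} (1/n) log (L_g^n 1)(x₀)`, which exists and is independent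
of the choice of `x₀ ∈ X` for bounded Hölder `g`. -/
def logLambda [Nonempty E] (p : Measure E) (g : (ℕ → E) → ℝ) : ℝ :=
  limUnder atTop fun n : ℕ =>
    (1 / (n : ℝ)) * Real.log ((ruelle p g)^[n] (fun _ => 1) (Classical.arbitrary (ℕ → E)))

/-- The variational entropy `h^v(μ) = inf { -μ(g) + log λ_g : g ∈ Hol(α) bounded }`,
with values in `ℝ ∪ {-∞}` (encoded in `EReal`). -/
def entropyV [Nonempty E] (p : Measure E) (α : ℝ) (μ : WeakDual ℝ ((ℕ → E) →ᵇ ℝ)) : EReal :=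
  sInf {r : EReal | ∃ g : (ℕ → E) →ᵇ ℝ, (∃ C : ℝ, HolderConst α C ⇑g) ∧
    r = ((-(μ g) + logLambda p ⇑g : ℝ) : EReal)}

/-! The function `μ ↦ h^v(μ) + μ(f)` is the infimum of the weak-* continuous affine functions
`μ ↦ μ(f - g) + log λ_g`, `g` Hölder. Hence its maximisers on the closed convex set `M^a_σ(X)`
form the intersection of `M^a_σ(X)` with closed half-spaces: a closed convex set, compact by
Banach–Alaoglu because every positive normalised functional has norm at most one. -/

theorem EReal.le_sInf_add_coe_iff {s : EReal} {S : Set EReal} {c : ℝ} :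
    s ≤ sInf S + c ↔ ∀ r ∈ S, s ≤ r + c := by
  have hc : ∀ {t : EReal}, s - c ≤ t ↔ s ≤ t + c := fun {t} =>
    EReal.sub_le_iff_le_add (.inl (EReal.coe_ne_bot c)) (.inl (EReal.coe_ne_top c))
  rw [← hc, le_sInf_iff]
  exact forall₂_congr fun _ _ => hc

section WeakDual

variable {V : Type*} [AddCommMonoid V] [Module ℝ V] [TopologicalSpace V]

theorem WeakDual.isClosed_setOf_le_coe_apply_add (s : EReal) (φ : V) (c : ℝ) :
    IsClosed {μ : WeakDual ℝ V | s ≤ ((μ φ + c : ℝ) : EReal)} :=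
  isClosed_le continuous_const
    (continuous_coe_real_ereal.comp ((WeakDual.eval_continuous φ).add continuous_const))

theorem WeakDual.convex_setOf_le_coe_apply_add (s : EReal) (φ : V) (c : ℝ) :
    Convex ℝ {μ : WeakDual ℝ V | s ≤ ((μ φ + c : ℝ) : EReal)} := by
  have hupper : IsUpperSet {x : ℝ | s ≤ ((x + c : ℝ) : EReal)} := fun _ _ hxy hx =>
    hx.trans (EReal.coe_le_coe_iff.2 (by linarith))
  exact hupper.ordConnected.convex.is_linear_preimage
    (f := fun μ : WeakDual ℝ V => μ φ) ⟨fun _ _ => rfl, fun _ _ => rfl⟩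

end WeakDual

section ShiftSpace

variable {E : Type*} [MetricSpace E]

theorem apply_le_norm_of_mem_Ma1 {μ : WeakDual ℝ ((ℕ → E) →ᵇ ℝ)} (hμ : μ ∈ Ma1 E)
    (g : (ℕ → E) →ᵇ ℝ) : μ g ≤ ‖g‖ := by
  obtain ⟨hμ1, hμpos⟩ := hμ
  have hdom : 0 ≤ ‖g‖ • (1 : (ℕ → E) →ᵇ ℝ) - g := fun x => by
    simpa using g.apply_le_norm x
  have := hμpos _ hdom
  rw [map_sub, map_smul, hμ1, smul_eq_mul, mul_one] at this
  linarith

theorem Ma1_subset_closedBall :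
    Ma1 E ⊆ WeakDual.toStrongDual ⁻¹' Metric.closedBall 0 1 := fun μ hμ =>
  mem_closedBall_zero_iff.2 <| ContinuousLinearMap.opNorm_le_bound _ zero_le_one fun g => by
    rw [one_mul, Real.norm_eq_abs]
    change |μ g| ≤ ‖g‖
    have hneg := apply_le_norm_of_mem_Ma1 hμ (-g)
    rw [map_neg, norm_neg] at hneg
    exact abs_le.2 ⟨by linarith, apply_le_norm_of_mem_Ma1 hμ g⟩

theorem isClosed_Maσ : IsClosed (Maσ E) := by
  have hMaσ : Maσ E = ({μ | μ 1 = 1} ∩ ⋂ g ∈ {g : (ℕ → E) →ᵇ ℝ | 0 ≤ g}, {μ | 0 ≤ μ g}) ∩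
      ⋂ g : (ℕ → E) →ᵇ ℝ, {μ : WeakDual ℝ ((ℕ → E) →ᵇ ℝ) |
        μ (g.compContinuous shiftCM) = μ g} := by
    ext μ
    simp only [Maσ, Ma1, Set.mem_ofPred_eq, Set.mem_inter_iff, Set.mem_iInter]
  rw [hMaσ]
  refine ((isClosed_eq (WeakDual.eval_continuous _) continuous_const).inter
    (isClosed_biInter fun g _ => isClosed_le continuous_const (WeakDual.eval_continuous g))).inter
    (isClosed_iInter fun g => isClosed_eq (WeakDual.eval_continuous _) (WeakDual.eval_continuous g))

theorem convex_Maσ : Convex ℝ (Maσ E) := by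
  rintro μ ⟨⟨hμ1, hμpos⟩, hμσ⟩ ν ⟨⟨hν1, hνpos⟩, hνσ⟩ a b ha hb hab
  refine ⟨⟨?_, fun g hg => ?_⟩, fun g => ?_⟩
  · change a * μ 1 + b * ν 1 = 1
    rw [hμ1, hν1, mul_one, mul_one, hab]
  · change 0 ≤ a * μ g + b * ν g
    exact add_nonneg (mul_nonneg ha (hμpos g hg)) (mul_nonneg hb (hνpos g hg))
  · change a * μ _ + b * ν _ = a * μ g + b * ν g
    rw [hμσ, hνσ]

variable [MeasurableSpace E] [Nonempty E]

theorem le_entropyV_add_iff (p : Measure E) (α : ℝ) (f : (ℕ → E) →ᵇ ℝ)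
    (μ : WeakDual ℝ ((ℕ → E) →ᵇ ℝ)) (s : EReal) :
    s ≤ entropyV p α μ + ((μ f : ℝ) : EReal) ↔
      ∀ g : (ℕ → E) →ᵇ ℝ, (∃ C : ℝ, HolderConst α C ⇑g) →
        s ≤ ((μ (f - g) + logLambda p ⇑g : ℝ) : EReal) := by
  have haffine : ∀ g : (ℕ → E) →ᵇ ℝ,
      (((-(μ g) + logLambda p ⇑g : ℝ) : EReal) + ((μ f : ℝ) : EReal)) =
        ((μ (f - g) + logLambda p ⇑g : ℝ) : EReal) := fun g => by
    rw [← EReal.coe_add, map_sub]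
    ring_nf
  rw [entropyV, EReal.le_sInf_add_coe_iff]
  refine ⟨fun h g hg => haffine g ▸ h _ ⟨g, hg, rfl⟩, ?_⟩
  rintro h _ ⟨g, hg, rfl⟩
  exact haffine g ▸ h g hg

def equilibriumStates (p : Measure E) (α : ℝ) (f : (ℕ → E) →ᵇ ℝ) :
    Set (WeakDual ℝ ((ℕ → E) →ᵇ ℝ)) :=
  {μ ∈ Maσ E | entropyV p α μ + ((μ f : ℝ) : EReal) =
    ⨆ ν ∈ Maσ E, entropyV p α ν + ((ν f : ℝ) : EReal)}

theorem equilibriumStates_eq_inter_iInter (p : Measure E) (α : ℝ) (f : (ℕ → E) →ᵇ ℝ) :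
    equilibriumStates p α f =
      Maσ E ∩ ⋂ (g : (ℕ → E) →ᵇ ℝ) (_ : ∃ C : ℝ, HolderConst α C ⇑g),
        {μ | (⨆ ν ∈ Maσ E, entropyV p α ν + ((ν f : ℝ) : EReal)) ≤
          ((μ (f - g) + logLambda p ⇑g : ℝ) : EReal)} := by
  ext μ
  simp only [equilibriumStates, Set.mem_ofPred_eq, Set.mem_inter_iff, Set.mem_iInter,
    ← le_entropyV_add_iff]
  exact and_congr_right fun hμ => (le_biSup (fun ν => entropyV p α ν + ((ν f : ℝ) : EReal))
    hμ).ge_iff_eq.symm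

theorem convex_equilibriumStates (p : Measure E) (α : ℝ) (f : (ℕ → E) →ᵇ ℝ) :
    Convex ℝ (equilibriumStates p α f) := by
  rw [equilibriumStates_eq_inter_iInter]
  exact convex_Maσ.inter (convex_iInter₂ fun g _ => WeakDual.convex_setOf_le_coe_apply_add ..)

theorem isCompact_equilibriumStates (p : Measure E) (α : ℝ) (f : (ℕ → E) →ᵇ ℝ) :
    IsCompact (equilibriumStates p α f) := by
  rw [equilibriumStates_eq_inter_iInter]
  refine (WeakDual.isCompact_closedBall 0 1).of_isClosed_subset ?_ ?_
  · exact isClosed_Maσ.inter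
      (isClosed_biInter fun g _ => WeakDual.isClosed_setOf_le_coe_apply_add ..)
  · exact Set.inter_subset_left.trans fun μ hμ => Ma1_subset_closedBall hμ.1

end ShiftSpace

theorem statement17_general {E : Type*} [MetricSpace E] [MeasurableSpace E] [Nonempty E]
    (p : Measure E)
    (α : ℝ)
    (f : (ℕ → E) →ᵇ ℝ) :
    Convex ℝ {μ ∈ Maσ E | entropyV p α μ + ((μ f : ℝ) : EReal) =
        ⨆ ν ∈ Maσ E, entropyV p α ν + ((ν f : ℝ) : EReal)} ∧
    IsCompact {μ ∈ Maσ E | entropyV p α μ + ((μ f : ℝ) : EReal) =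
        ⨆ ν ∈ Maσ E, entropyV p α ν + ((ν f : ℝ) : EReal)} :=
  ⟨convex_equilibriumStates p α f, isCompact_equilibriumStates p α f⟩

/-- For every bounded continuous potential `f`, the set `Eq(f)` of
equilibrium states is convex and weak-* compact in `M^a_σ(X)`. -/
theorem statement17 {E : Type*} [MetricSpace E] [CompleteSpace E]
    [TopologicalSpace.SeparableSpace E] [MeasurableSpace E] [BorelSpace E] [Nonempty E]
    (p : Measure E) [IsProbabilityMeasure p]
    (α : ℝ) (hα0 : 0 < α) (hα1 : α < 1)
    (f : (ℕ → E) →ᵇ ℝ) :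
    Convex ℝ {μ ∈ Maσ E | entropyV p α μ + ((μ f : ℝ) : EReal) =
        ⨆ ν ∈ Maσ E, entropyV p α ν + ((ν f : ℝ) : EReal)} ∧
    IsCompact {μ ∈ Maσ E | entropyV p α μ + ((μ f : ℝ) : EReal) =
        ⨆ ν ∈ Maσ E, entropyV p α ν + ((ν f : ℝ) : EReal)} :=
  statement17_general p α f

end
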